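/- Let n, k, Δ be integers with 0 < k < n and 0 ≤ Δ < n, and let N be a positive integer. There exists a code C ∈ PCAC_Δ(n,k) with |C| = N if and only if the complete graph K_n has a (k,Δ)-packing P = {P_1, …, P_N} of size N; more precisely, C ∈ PCAC_Δ(n,k) if and only if {I_X : X ∈ C} is a (k,Δ)-packing of K_n of size |C|. -/

import Mathlib

/-- Cyclic cross-correlation of two sequences `X, Y : ZMod n → ℕ` at shift `τ`:
`Σ_{i=0}^{n-1} X(i) * (R^τ Y)(i)` where `(R^τ Y)(i) = Y(i - τ)`. -/
def corr (n : ℕ) (X Y : ZMod n → ℕ) (τ : ℕ) : ℕ :=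
  ∑ i ∈ Finset.range n, X (i : ZMod n) * Y ((i : ZMod n) - (τ : ZMod n))

/-- Hamming cross-correlation with respect to `Δ`:
`H_Δ(X,Y) = max_{0 ≤ τ ≤ Δ} Σ_i X(i) (R^τ Y)(i)`. -/
def Hcorr (n Δ : ℕ) (X Y : ZMod n → ℕ) : ℕ :=
  (Finset.range (Δ + 1)).sup (corr n X Y)

/-- Characteristic set `I_X = {t ∈ Z_n : X(t) = 1}` (as a finite set). -/
def Iset (n : ℕ) (X : ZMod n → ℕ) : Finset (ZMod n) :=
  ((Finset.range n).image (fun (i : ℕ) => (i : ZMod n))).filter (fun t => X t = 1)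

/-- `X` is a binary sequence of length `n` and weight `k`, i.e. `X ∈ S(n,k)`. -/
def IsSeq (n k : ℕ) (X : ZMod n → ℕ) : Prop :=
  (∀ i, X i = 0 ∨ X i = 1) ∧ (Iset n X).card = k

/-- `C ∈ PCAC_Δ(n,k)` : a partially conflict-avoiding code with respect to `Δ`,
of length `n` and weight `k`. -/
def IsPCAC (n k Δ : ℕ) (C : Finset (ZMod n → ℕ)) : Prop :=
  (∀ X ∈ C, IsSeq n k X) ∧
  ∀ X ∈ C, ∀ Y ∈ C, X ≠ Y → Hcorr n Δ X Y ≤ 1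

/-- Edge set `E_Δ(A)` of the supporting graph `G_Δ(A)`: all unordered pairs
`{a+τ, b+τ}` (mod `n`) with `a, b ∈ A`, `a ≠ b`, `0 ≤ τ ≤ Δ`. -/
def Eset (n Δ : ℕ) (A : Finset (ZMod n)) : Set (Sym2 (ZMod n)) :=
  {e | ∃ a ∈ A, ∃ b ∈ A, a ≠ b ∧ ∃ τ : ℕ, τ ≤ Δ ∧ e = s(a + (τ : ZMod n), b + (τ : ZMod n))}

/-- `P` is a `(k,Δ)`-packing of `K_n`: a family of `k`-subsets of `Z_n` whose
supporting graphs are pairwise edge-disjoint. -/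
def IsPacking (n k Δ : ℕ) (P : Finset (Finset (ZMod n))) : Prop :=
  (∀ A ∈ P, A.card = k) ∧
  ∀ A ∈ P, ∀ B ∈ P, A ≠ B → Eset n Δ A ∩ Eset n Δ B = ∅

lemma mem_Iset {n : ℕ} [NeZero n] (X : ZMod n → ℕ) (t : ZMod n) :
    t ∈ Iset n X ↔ X t = 1 := by
  constructor
  · intro h; exact (Finset.mem_filter.mp h).2
  · intro h
    refine Finset.mem_filter.mpr ⟨Finset.mem_image.mpr ⟨t.val,
      Finset.mem_range.mpr (ZMod.val_lt t), ZMod.natCast_rightInverse t⟩, h⟩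
lemma sum_range_cast {n : ℕ} [NeZero n] (g : ZMod n → ℕ) :
    ∑ i ∈ Finset.range n, g (i : ZMod n) = ∑ t : ZMod n, g t := by
  refine Finset.sum_nbij' (fun (i : ℕ) => (i : ZMod n)) (fun t => t.val) ?_ ?_ ?_ ?_ ?_
  · intro a _; exact Finset.mem_univ _
  · intro t _; exact Finset.mem_range.mpr (ZMod.val_lt t)
  · intro a ha; exact ZMod.val_cast_of_lt (Finset.mem_range.mp ha)
  · intro t _; exact ZMod.natCast_rightInverse t
  · intro a _; rfl
lemma corr_eq {n : ℕ} [NeZero n] (X Y : ZMod n → ℕ)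
    (hX : ∀ i, X i = 0 ∨ X i = 1) (hY : ∀ i, Y i = 0 ∨ Y i = 1) (τ : ℕ) :
    corr n X Y τ = ((Iset n X).filter (fun t => t - (τ : ZMod n) ∈ Iset n Y)).card := by
  have h1 : ((Iset n X).filter (fun t => t - (τ : ZMod n) ∈ Iset n Y)) =
      Finset.univ.filter (fun t => X t = 1 ∧ Y (t - (τ : ZMod n)) = 1) := by
    ext t
    simp [Finset.mem_filter, mem_Iset]
  rw [corr, sum_range_cast (fun t => X t * Y (t - (τ : ZMod n))), h1, Finset.card_filter]
  apply Finset.sum_congr rfl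
  intro t _
  rcases hX t with h | h <;> rcases hY (t - (τ : ZMod n)) with h' | h' <;>
    simp [h, h']
lemma two_le_corr {n : ℕ} [NeZero n] (X Y : ZMod n → ℕ)
    (hX : ∀ i, X i = 0 ∨ X i = 1) (hY : ∀ i, Y i = 0 ∨ Y i = 1) {a a' : ZMod n} {c : ℕ}
    (ha : a ∈ Iset n X) (ha' : a' ∈ Iset n X) (hne : a ≠ a')
    (hb : a - (c : ZMod n) ∈ Iset n Y) (hb' : a' - (c : ZMod n) ∈ Iset n Y) :
    2 ≤ corr n X Y c := by
  rw [corr_eq X Y hX hY c]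
  refine Finset.one_lt_card.mpr ⟨a, ?_, a', ?_, hne⟩ <;>
    simp [Finset.mem_filter, *]
lemma corr_le_Hcorr {n Δ : ℕ} (X Y : ZMod n → ℕ) {c : ℕ} (hc : c ≤ Δ) :
    corr n X Y c ≤ Hcorr n Δ X Y :=
  Finset.le_sup (Finset.mem_range.mpr (by omega))
lemma aux_false {n Δ : ℕ} [NeZero n] (X Y : ZMod n → ℕ)
    (hX : ∀ i, X i = 0 ∨ X i = 1) (hY : ∀ i, Y i = 0 ∨ Y i = 1)
    (hHXY : Hcorr n Δ X Y ≤ 1) (hHYX : Hcorr n Δ Y X ≤ 1)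
    {a a' b b' : ZMod n} {τ σ : ℕ} (hτ : τ ≤ Δ) (hσ : σ ≤ Δ)
    (ha : a ∈ Iset n X) (ha' : a' ∈ Iset n X) (haa : a ≠ a')
    (hb : b ∈ Iset n Y) (hb' : b' ∈ Iset n Y)
    (h1 : a + (τ : ZMod n) = b + (σ : ZMod n))
    (h2 : a' + (τ : ZMod n) = b' + (σ : ZMod n)) : False := by
  rcases le_total σ τ with hle | hle
  · set c := τ - σ with hcdef
    have hc : (c : ZMod n) = (τ : ZMod n) - (σ : ZMod n) := by
      rw [hcdef, Nat.cast_sub hle]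
    have hbc : b - (c : ZMod n) = a := by rw [hc]; linear_combination -h1
    have hbc' : b' - (c : ZMod n) = a' := by rw [hc]; linear_combination -h2
    have hbb : b ≠ b' := by
      intro h; apply haa; rw [← hbc, ← hbc', h]
    have h2le : 2 ≤ corr n Y X c :=
      two_le_corr Y X hY hX hb hb' hbb (hbc ▸ ha) (hbc' ▸ ha')
    have := corr_le_Hcorr (Δ := Δ) Y X (c := c) (by omega)
    omega
  · set c := σ - τ with hcdef
    have hc : (c : ZMod n) = (σ : ZMod n) - (τ : ZMod n) := by
      rw [hcdef, Nat.cast_sub hle]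
    have hbc : a - (c : ZMod n) = b := by rw [hc]; linear_combination h1
    have hbc' : a' - (c : ZMod n) = b' := by rw [hc]; linear_combination h2
    have h2le : 2 ≤ corr n X Y c :=
      two_le_corr X Y hX hY ha ha' haa (hbc ▸ hb) (hbc' ▸ hb')
    have := corr_le_Hcorr (Δ := Δ) X Y (c := c) (by omega)
    omega
lemma Hcorr_le_of_disjoint {n Δ : ℕ} [NeZero n] (X Y : ZMod n → ℕ)
    (hX : ∀ i, X i = 0 ∨ X i = 1) (hY : ∀ i, Y i = 0 ∨ Y i = 1)
    (hdisj : Eset n Δ (Iset n X) ∩ Eset n Δ (Iset n Y) = ∅) :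
    Hcorr n Δ X Y ≤ 1 := by
  apply Finset.sup_le
  intro τ hτ
  by_contra hcon
  push_neg at hcon
  rw [corr_eq X Y hX hY τ] at hcon
  obtain ⟨t, ht, t', ht', htt⟩ := Finset.one_lt_card.mp hcon
  rw [Finset.mem_filter] at ht ht'
  have hmem : s(t, t') ∈ Eset n Δ (Iset n X) ∩ Eset n Δ (Iset n Y) := by
    constructor
    · exact ⟨t, ht.1, t', ht'.1, htt, 0, Nat.zero_le _, by simp⟩
    · refine ⟨t - (τ : ZMod n), ht.2, t' - (τ : ZMod n), ht'.2, ?_, τ,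
        Nat.lt_succ_iff.mp (Finset.mem_range.mp hτ), by simp⟩
      intro h; apply htt; linear_combination h
  rw [hdisj] at hmem
  exact hmem
lemma key {n : ℕ} [NeZero n] (Δ : ℕ) (X Y : ZMod n → ℕ)
    (hX : ∀ i, X i = 0 ∨ X i = 1) (hY : ∀ i, Y i = 0 ∨ Y i = 1) :
    (Hcorr n Δ X Y ≤ 1 ∧ Hcorr n Δ Y X ≤ 1) ↔
      Eset n Δ (Iset n X) ∩ Eset n Δ (Iset n Y) = ∅ := by
  constructor
  · rintro ⟨hXY, hYX⟩
    rw [Set.eq_empty_iff_forall_notMem]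
    rintro e ⟨⟨a, ha, a', ha', haa, τ, hτ, he1⟩, ⟨b, hb, b', hb', hbb, σ, hσ, he2⟩⟩
    rw [he1, Sym2.eq_iff] at he2
    rcases he2 with ⟨h1, h2⟩ | ⟨h1, h2⟩
    · exact aux_false X Y hX hY hXY hYX hτ hσ ha ha' haa hb hb' h1 h2
    · exact aux_false X Y hX hY hXY hYX hτ hσ ha ha' haa hb' hb h1 h2
  · intro hdisj
    exact ⟨Hcorr_le_of_disjoint X Y hX hY hdisj,
      Hcorr_le_of_disjoint Y X hY hX (by rw [Set.inter_comm]; exact hdisj)⟩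
lemma eq_of_Iset {n : ℕ} [NeZero n] {X Y : ZMod n → ℕ}
    (hX : ∀ i, X i = 0 ∨ X i = 1) (hY : ∀ i, Y i = 0 ∨ Y i = 1)
    (h : Iset n X = Iset n Y) : X = Y := by
  funext t
  have hm : X t = 1 ↔ Y t = 1 := by rw [← mem_Iset, ← mem_Iset, h]
  rcases hX t with h0 | h1 <;> rcases hY t with h0' | h1' <;> omega
lemma Iset_ind {n : ℕ} [NeZero n] (A : Finset (ZMod n)) :
    Iset n (fun t => if t ∈ A then 1 else 0) = A := by
  ext t
  rw [mem_Iset]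
  by_cases h : t ∈ A <;> simp [h]

/-- There exists `C ∈ PCAC_Δ(n,k)` with `|C| = N` iff `K_n` has a
`(k,Δ)`-packing of size `N`; more precisely, a set `C ⊆ S(n,k)` is a `PCAC_Δ` iff
`{I_X : X ∈ C}` is a `(k,Δ)`-packing of `K_n` of size `|C|`. -/
theorem pcac_iff_packing (n k Δ N : ℕ) (hk : 0 < k) (hkn : k < n) (hΔ : Δ < n)
    (hN : 0 < N) :
    ((∃ C : Finset (ZMod n → ℕ), IsPCAC n k Δ C ∧ C.card = N) ↔
      (∃ P : Finset (Finset (ZMod n)), IsPacking n k Δ P ∧ P.card = N)) ∧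
    (∀ C : Finset (ZMod n → ℕ), (∀ X ∈ C, IsSeq n k X) →
      (IsPCAC n k Δ C ↔
        (IsPacking n k Δ (C.image (Iset n)) ∧ (C.image (Iset n)).card = C.card))) := by
  have : NeZero n := ⟨by omega⟩
  have main : ∀ C : Finset (ZMod n → ℕ), (∀ X ∈ C, IsSeq n k X) →
      (IsPCAC n k Δ C ↔
        (IsPacking n k Δ (C.image (Iset n)) ∧ (C.image (Iset n)).card = C.card)) := by
    intro C hseq
    constructor
    · intro hpcac
      refine ⟨⟨?_, ?_⟩, ?_⟩
      · intro A hA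
        obtain ⟨X, hX, rfl⟩ := Finset.mem_image.mp hA
        exact (hseq X hX).2
      · intro A hA B hB hAB
        obtain ⟨X, hX, rfl⟩ := Finset.mem_image.mp hA
        obtain ⟨Y, hY, rfl⟩ := Finset.mem_image.mp hB
        have hXY : X ≠ Y := fun h => hAB (by rw [h])
        exact (key Δ X Y (hseq X hX).1 (hseq Y hY).1).mp
          ⟨hpcac.2 X hX Y hY hXY, hpcac.2 Y hY X hX hXY.symm⟩
      · apply Finset.card_image_of_injOn
        intro X hX Y hY h
        exact eq_of_Iset (hseq X hX).1 (hseq Y hY).1 h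
    · rintro ⟨hpack, hcard⟩
      refine ⟨hseq, ?_⟩
      intro X hX Y hY hXY
      have hinj : Set.InjOn (Iset n) C := Finset.card_image_iff.mp hcard
      have hne : Iset n X ≠ Iset n Y := fun h => hXY (hinj hX hY h)
      have hdisj := hpack.2 (Iset n X) (Finset.mem_image_of_mem _ hX)
        (Iset n Y) (Finset.mem_image_of_mem _ hY) hne
      exact ((key Δ X Y (hseq X hX).1 (hseq Y hY).1).mpr hdisj).1
  refine ⟨?_, main⟩
  constructor
  · rintro ⟨C, hC, hcard⟩
    exact ⟨C.image (Iset n), ((main C hC.1).mp hC).1,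
      by rw [((main C hC.1).mp hC).2, hcard]⟩
  · rintro ⟨P, hP, hcard⟩
    set ind : Finset (ZMod n) → (ZMod n → ℕ) := fun A t => if t ∈ A then 1 else 0 with hind
    have hIind : ∀ A, Iset n (ind A) = A := by
      intro A; rw [hind]; exact Iset_ind A
    have hindinj : Function.Injective ind := by
      intro A B h
      have h' := congrArg (Iset n) h
      rwa [hIind, hIind] at h'
    have hbin : ∀ A, ∀ i, ind A i = 0 ∨ ind A i = 1 := by
      intro A i; by_cases h : i ∈ A <;> simp [ind, h]
    refine ⟨P.image ind, ?_, by rw [Finset.card_image_of_injective _ hindinj, hcard]⟩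
    have hseq : ∀ X ∈ P.image ind, IsSeq n k X := by
      intro X hXmem
      obtain ⟨A, hA, rfl⟩ := Finset.mem_image.mp hXmem
      exact ⟨hbin A, by rw [hIind A]; exact hP.1 A hA⟩
    refine ⟨hseq, ?_⟩
    intro X hXmem Y hYmem hXY
    obtain ⟨A, hA, rfl⟩ := Finset.mem_image.mp hXmem
    obtain ⟨B, hB, rfl⟩ := Finset.mem_image.mp hYmem
    have hAB : A ≠ B := fun h => hXY (by rw [h])
    have hdisj := hP.2 A hA B hB hAB
    have h1 : Iset n (ind A) = A := hIind A
    have h2 : Iset n (ind B) = B := hIind B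
    exact ((key Δ (ind A) (ind B) (hbin A) (hbin B)).mpr
      (by rw [h1, h2]; exact hdisj)).1
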